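/- Let α be a simple zero of A(·)² − λ², and for x near α let x̂ − α = e^{−2πi}(x − α) denote rotation by −2π around α, interpreted via analytic continuation of the branches. If A(α) = λ then H(x) = −iH(x̂), and if A(α) = −λ then H(x) = iH(x̂); consequently Q(x) = ±iQ(x̂)·σ in the respective cases A(α) = ±λ, where σ = [[0,1],[1,0]], and the exact WKB solution with phase base point α and series base point x₂ satisfies u⁺(x,h;α,x₂) = ±i·u⁻(x̂,h;α,x̂₂). -/

import Mathlib

/-!
STATEMENT 10 (Lemma on the rotated branch of `H` and the solutions).

Let `α` be a simple zero of `A(·)² - λ²` and let `x̂ - α = e^{-2πi}(x - α)` denote the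
rotation by `-2π` around `α` (analytic continuation of the branches). If `A(α) = λ`
then `H(x) = -i H(x̂)` (i.e. `H(x̂) = i H(x)`), and if `A(α) = -λ` then `H(x) = i H(x̂)`
(i.e. `H(x̂) = -i H(x)`). Consequently `Q(x) = ±i Q(x̂) σ` with `σ = [[0,1],[1,0]]`, and
the exact WKB solutions satisfy `u⁺(x,h;α,x₂) = ±i u⁻(x̂,h;α,x̂₂)` in the respective
cases `A(α) = ±λ`.

The value `H(x̂)` is encoded as the endpoint of a continuous lift of the defining
equation of `H` along the loop `t ↦ α + e^{-2πit}(x - α)`; the rotated solution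
`u⁻(x̂,h;α,x̂₂)` is the `u⁻`-solution built from the rotated data: phase `-z`,
branch `Ĥ`, and the `-`-series of the rotated branch (`sq` replaced by `-sq`).
-/

open Complex Set

noncomputable section

/-- `(we, wo)` is the pair of summed exact WKB series with sign `s = ±1` and base
point `x₀`. -/
def IsWKBSum (Ω : Set ℂ) (h : ℝ) (s : ℂ) (sq H : ℂ → ℂ) (x₀ : ℂ) (we wo : ℂ → ℂ) : Prop :=
  we x₀ = 1 ∧ wo x₀ = 0 ∧ ∀ x ∈ Ω,
    HasDerivAt we (deriv H x / H x * wo x) x ∧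
    HasDerivAt wo (deriv H x / H x * we x - s * (2 * sq x / (h : ℂ)) * wo x) x

/-- The exact WKB solution `u⁺`, componentwise. -/
def wkbPlus (h : ℝ) (Z H we wo : ℂ → ℂ) (x : ℂ) : ℂ × ℂ :=
  (Complex.exp (Z x / (h : ℂ)) *
      ((H x)⁻¹ * (wo x + we x) + Complex.I * H x * (wo x - we x)),
   Complex.exp (Z x / (h : ℂ)) *
      (-Complex.I * (H x)⁻¹ * (wo x + we x) - H x * (wo x - we x)))

/-- The exact WKB solution `u⁻`, componentwise. -/
def wkbMinus (h : ℝ) (Z H we wo : ℂ → ℂ) (x : ℂ) : ℂ × ℂ :=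
  (Complex.exp (-Z x / (h : ℂ)) *
      ((H x)⁻¹ * (we x + wo x) + Complex.I * H x * (we x - wo x)),
   Complex.exp (-Z x / (h : ℂ)) *
      (-Complex.I * (H x)⁻¹ * (we x + wo x) - H x * (we x - wo x)))

/-- The matrix `Q(x) = [[H⁻¹, H⁻¹],[iH, -iH]]` (as a function of the value `H(x)`). -/
def qMat (Hx : ℂ) : Matrix (Fin 2) (Fin 2) ℂ :=
  !![Hx⁻¹, Hx⁻¹; Complex.I * Hx, -Complex.I * Hx]

/-- The matrix `σ = [[0,1],[1,0]]`. -/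
def sigmaMat : Matrix (Fin 2) (Fin 2) ℂ := !![0, 1; 1, 0]


/-!
Near the simple zero, `A - λ = (y - α) B(y)` with `B = dslope A α` nonvanishing, so on a disc
around `α` (when `A(α) = λ`) the right-hand side of `H⁴ = (A + λ)/(A - λ)` is `(y - α)⁻¹ f(y)`
with `f` nonvanishing, hence with a continuous fourth root on the disc. Along the clockwise loop
the factor `(y - α)^{-1/4}` picks up `e^{2πi/4} = i`, and any continuous fourth root along the
loop differs from this explicit one by a constant root of unity. Swapping `λ ↦ -λ` inverts
the right-hand side, which gives the case `A(α) = -λ`.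

For the solutions: `Ĥ = ±iH` has the same logarithmic derivative as `H`, and changing the signs
of both `s` and `√(A² - λ²)` leaves the WKB system unchanged, so the rotated series coincide with
the original ones by uniqueness for this linear system (local vanishing from the mean value
inequality, then the identity theorem, the sums being holomorphic). What is left is the algebraic
identity behind `Q(x) = ±i Q(x̂) σ`, which only uses `(±i)² = -1`.
-/

open Filter Topology Metric

theorem IsPreconnected.mul_eq_mul_of_pow_eq_pow {X K : Type*} [TopologicalSpace X] [Field K]
    [TopologicalSpace K] [IsTopologicalDivisionRing K] [T1Space K] {S : Set X}
    (hS : IsPreconnected S) {n : ℕ} (hn : n ≠ 0) {f g : X → K} (hf : ContinuousOn f S)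
    (hg : ContinuousOn g S) (hg0 : ∀ x ∈ S, g x ≠ 0) (hfg : ∀ x ∈ S, f x ^ n = g x ^ n)
    {x y : X} (hx : x ∈ S) (hy : y ∈ S) : f x * g y = f y * g x := by
  have hroots : MapsTo (f / g) S (Polynomial.nthRootsFinset n (1 : K)) := by
    intro z hz
    rw [Finset.mem_coe, Polynomial.mem_nthRootsFinset (Nat.pos_of_ne_zero hn), Pi.div_apply,
      div_pow, hfg z hz, div_self (pow_ne_zero _ (hg0 z hz))]
  have := hS.constant_of_mapsTo (Finset.finite_toSet _).isDiscrete (hf.div hg hg0) hroots hx hy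
  rwa [Pi.div_apply, Pi.div_apply, div_eq_div_iff (hg0 x hx) (hg0 y hy)] at this

def clockwiseLoop (α x : ℂ) (t : ℝ) : ℂ :=
  α + Complex.exp (-2 * Real.pi * Complex.I * (t : ℂ)) * (x - α)

section clockwiseLoop
variable (α x : ℂ)

theorem continuous_clockwiseLoop : Continuous (clockwiseLoop α x) := by
  unfold clockwiseLoop; fun_prop

theorem clockwiseLoop_sub (t : ℝ) :
    clockwiseLoop α x t - α = exp (-2 * Real.pi * I * t) * (x - α) :=
  add_sub_cancel_left α _

@[simp] theorem clockwiseLoop_zero : clockwiseLoop α x 0 = x := by simp [clockwiseLoop]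

@[simp] theorem clockwiseLoop_one : clockwiseLoop α x 1 = x := by
  simp [clockwiseLoop, exp_neg]

theorem dist_clockwiseLoop (t : ℝ) : dist (clockwiseLoop α x t) α = dist x α := by
  rw [dist_eq_norm, clockwiseLoop_sub, norm_mul, norm_exp, dist_eq_norm]
  simp

end clockwiseLoop

theorem isSimplyConnected_ball {E : Type*} [NormedAddCommGroup E] [NormedSpace ℝ E] (c : E)
    {R : ℝ} (hR : 0 < R) : IsSimplyConnected (ball c R) := by
  have := (convex_ball c R).contractibleSpace ⟨c, mem_ball_self hR⟩
  exact SimplyConnectedSpace.ofContractible _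

theorem monodromy_clockwiseLoop_root {W : Set ℂ} (hWs : IsSimplyConnected W) (hWo : IsOpen W)
    {f : ℂ → ℂ} (hf : ContinuousOn f W) (hf0 : ∀ y ∈ W, f y ≠ 0) {α x : ℂ} (hx : x ≠ α)
    (hW : ∀ t, clockwiseLoop α x t ∈ W) {n : ℕ} (hn : n ≠ 0) (k : ℤ) {G : ℝ → ℂ}
    (hG : ContinuousOn G (Icc 0 1))
    (hGn : ∀ t ∈ Icc (0 : ℝ) 1,
      G t ^ n = (clockwiseLoop α x t - α) ^ k * f (clockwiseLoop α x t)) :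
    G 1 = exp (-2 * Real.pi * I * k / n) * G 0 := by
  obtain ⟨F, hFc, hF⟩ := exists_continuousOn_pow_eq hWs hWo hf
    (fun ⟨y, hy, hy0⟩ => hf0 y hy hy0) hn
  obtain ⟨r, hr⟩ := IsAlgClosed.exists_pow_nat_eq (x - α) (Nat.pos_of_ne_zero hn)
  have hr0 : r ≠ 0 := by
    rintro rfl
    exact hx (sub_eq_zero.1 (by rw [← hr, zero_pow hn]))
  -- `exp (-2πikt/n) r ^ k` is a continuous `n`-th root of `(clockwiseLoop α x t - α) ^ k`
  set R : ℝ → ℂ := fun t =>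
    exp (-2 * Real.pi * I * k * t / n) * r ^ k * F (clockwiseLoop α x t) with hRdef
  have hRn : ∀ t, R t ^ n = (clockwiseLoop α x t - α) ^ k * f (clockwiseLoop α x t) := by
    intro t
    have hexp : exp (-2 * Real.pi * I * k * t / n) ^ n = exp (-2 * Real.pi * I * t) ^ k := by
      rw [← exp_nat_mul, ← exp_int_mul]
      congr 1
      field_simp
    rw [hRdef, mul_pow, mul_pow, hexp, hF, clockwiseLoop_sub, mul_zpow, ← zpow_natCast,
      ← zpow_mul, mul_comm (k : ℤ), zpow_mul, zpow_natCast, hr]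
  have hR0 : ∀ t, R t ≠ 0 := fun t => mul_ne_zero (mul_ne_zero (exp_ne_zero _)
    (zpow_ne_zero _ hr0)) fun h => hf0 _ (hW t) (by rw [← hF, h, zero_pow hn])
  have hRc : ContinuousOn R (Icc 0 1) := by
    refine ContinuousOn.mul (by fun_prop) ?_
    exact hFc.comp (continuous_clockwiseLoop α x).continuousOn fun t _ => hW t
  have hR1 : R 1 = exp (-2 * Real.pi * I * k / n) * R 0 := by
    simp only [hRdef, clockwiseLoop_one, clockwiseLoop_zero, ofReal_one, ofReal_zero, mul_one,
      mul_zero, zero_div, exp_zero, one_mul, mul_assoc]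
  have := isPreconnected_Icc.mul_eq_mul_of_pow_eq_pow hn hG hRc (fun t _ => hR0 t)
    (fun t ht => (hGn t ht).trans (hRn t).symm) (right_mem_Icc.2 zero_le_one)
    (left_mem_Icc.2 zero_le_one)
  rw [hR1] at this
  exact mul_right_cancel₀ (hR0 0) (by rw [this]; ring)

theorem fourthRoot_clockwiseLoop_one_of_apply_eq {A : ℂ → ℂ} {lam α x : ℂ} {U : Set ℂ}
    (hU : IsOpen U) (hA : DifferentiableOn ℂ A U) (hAα : A α = lam) (hlam : lam ≠ 0)
    (hderiv : deriv A α ≠ 0) (hnv : ∀ y ∈ U, y ≠ α → A y ^ 2 - lam ^ 2 ≠ 0) (hx : x ≠ α)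
    (hxU : closedBall α (dist x α) ⊆ U) {G : ℝ → ℂ} (hG : ContinuousOn G (Icc 0 1))
    (hG4 : ∀ t ∈ Icc (0 : ℝ) 1,
      G t ^ 4 = (A (clockwiseLoop α x t) + lam) / (A (clockwiseLoop α x t) - lam)) :
    G 1 = I * G 0 := by
  obtain ⟨δ, hδ, hδU⟩ := (isCompact_closedBall α (dist x α)).exists_thickening_subset_open hU hxU
  rw [thickening_closedBall hδ dist_nonneg] at hδU
  have hR : 0 < δ + dist x α := by positivity
  have hne : ∀ y ∈ ball α (δ + dist x α), y ≠ α → A y ≠ lam ∧ A y ≠ -lam := fun y hy hyα =>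
    not_or.1 ((sq_eq_sq_iff_eq_or_eq_neg).not.1 (sub_ne_zero.1 (hnv y (hδU hy) hyα)))
  have hB : ∀ y, A y - lam = (y - α) * dslope A α y := fun y => by
    rw [← hAα, ← smul_eq_mul, sub_smul_dslope]
  have hB0 : ∀ y ∈ ball α (δ + dist x α), dslope A α y ≠ 0 := by
    intro y hy
    rcases eq_or_ne y α with rfl | hyα
    · rwa [dslope_same]
    · refine right_ne_zero_of_mul (a := y - α) fun h => (hne y hy hyα).1 ?_
      rwa [← hB, sub_eq_zero] at h
  have hBc : ContinuousOn (dslope A α) (ball α (δ + dist x α)) :=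
    ((differentiableOn_dslope (ball_mem_nhds α hR)).2 (hA.mono hδU)).continuousOn
  have hplus : ∀ y ∈ ball α (δ + dist x α), A y + lam ≠ 0 := by
    intro y hy
    rcases eq_or_ne y α with rfl | hyα
    · rw [hAα, ← two_mul]; exact mul_ne_zero two_ne_zero hlam
    · exact fun h => (hne y hy hyα).2 (add_eq_zero_iff_eq_neg.1 h)
  have hloop : ∀ t, clockwiseLoop α x t ∈ ball α (δ + dist x α) := fun t => by
    rw [mem_ball, dist_clockwiseLoop]; linarith
  have := monodromy_clockwiseLoop_root (f := fun y => (A y + lam) / dslope A α y)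
    (isSimplyConnected_ball α hR) isOpen_ball
    (((hA.mono hδU).continuousOn.add continuousOn_const).div hBc hB0)
    (fun y hy => div_ne_zero (hplus y hy) (hB0 y hy)) hx hloop four_ne_zero (-1) hG
    (fun t ht => by rw [hG4 t ht, hB, zpow_neg_one, div_mul_eq_div_div_swap, inv_mul_eq_div])
  rwa [show -2 * (Real.pi : ℂ) * I * ((-1 : ℤ) : ℂ) / ((4 : ℕ) : ℂ) = Real.pi / 2 * I by
    push_cast; ring, exp_pi_div_two_mul_I] at this

theorem fourthRoot_clockwiseLoop_one_of_apply_eq_neg {A : ℂ → ℂ} {lam α x : ℂ} {U : Set ℂ}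
    (hU : IsOpen U) (hA : DifferentiableOn ℂ A U) (hAα : A α = -lam) (hlam : lam ≠ 0)
    (hderiv : deriv A α ≠ 0) (hnv : ∀ y ∈ U, y ≠ α → A y ^ 2 - lam ^ 2 ≠ 0) (hx : x ≠ α)
    (hxU : closedBall α (dist x α) ⊆ U) {G : ℝ → ℂ} (hG : ContinuousOn G (Icc 0 1))
    (hG4 : ∀ t ∈ Icc (0 : ℝ) 1,
      G t ^ 4 = (A (clockwiseLoop α x t) + lam) / (A (clockwiseLoop α x t) - lam)) :
    G 1 = -I * G 0 := by
  have hG0 : ∀ t ∈ Icc (0 : ℝ) 1, G t ≠ 0 := by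
    intro t ht hGt
    have hloop : clockwiseLoop α x t ≠ α := fun h => hx (dist_eq_zero.1 (by
      rw [← dist_clockwiseLoop α x t, h, dist_self]))
    have h0 := hnv _ (hxU (mem_closedBall.2 (dist_clockwiseLoop α x t).le)) hloop
    have h4 := hG4 t ht
    rw [hGt, zero_pow four_ne_zero, eq_comm, div_eq_zero_iff, add_eq_zero_iff_eq_neg,
      sub_eq_zero] at h4
    exact h0 (sub_eq_zero.2 (sq_eq_sq_iff_eq_or_eq_neg.2 h4.symm))
  have := fourthRoot_clockwiseLoop_one_of_apply_eq (lam := -lam) (G := fun t => (G t)⁻¹) hU hA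
    hAα (neg_ne_zero.2 hlam) hderiv (by simpa only [neg_sq] using hnv) hx hxU (hG.inv₀ hG0)
    (fun t ht => by rw [inv_pow, hG4 t ht, inv_div, sub_neg_eq_add, ← sub_eq_add_neg])
  rw [inv_eq_iff_eq_inv, mul_inv, inv_inv, inv_I] at this
  exact this

theorem eventuallyEq_zero_of_norm_deriv_le {𝕜 E : Type*} [RCLike 𝕜] [NormedAddCommGroup E]
    [NormedSpace 𝕜 E] {w w' : 𝕜 → E} {x₀ : 𝕜} {M : ℝ}
    (hw : ∀ᶠ x in 𝓝 x₀, HasDerivAt w (w' x) x) (hM : ∀ᶠ x in 𝓝 x₀, ‖w' x‖ ≤ M * ‖w x‖)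
    (h0 : w x₀ = 0) : w =ᶠ[𝓝 x₀] 0 := by
  obtain ⟨ε, hε, hball⟩ := eventually_nhds_iff_ball.1 (hw.and hM)
  -- on a ball of radius `r` with `|M| r < 1`, the mean value inequality gives
  -- `max ‖w‖ ≤ |M| r max ‖w‖`
  set r := min (ε / 2) (1 / (|M| + 1))
  have hr : 0 < r := by positivity
  have hrε : r < ε := (min_le_left _ _).trans_lt (half_lt_self hε)
  have hMr : |M| * r < 1 := by
    calc |M| * r ≤ |M| * (1 / (|M| + 1)) := by gcongr; exact min_le_right _ _
      _ < 1 := by rw [mul_one_div, div_lt_one (by positivity)]; linarith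
  have hK : ∀ y ∈ closedBall x₀ r, HasDerivAt w (w' y) y ∧ ‖w' y‖ ≤ M * ‖w y‖ := fun y hy =>
    hball y (closedBall_subset_ball hrε hy)
  obtain ⟨z, hz, hmax⟩ := (isCompact_closedBall x₀ r).exists_isMaxOn
    ⟨x₀, mem_closedBall_self hr.le⟩
    fun y hy => (hK y hy).1.continuousAt.norm.continuousWithinAt
  have hderiv : ∀ y ∈ closedBall x₀ r, ‖w' y‖ ≤ |M| * ‖w z‖ := fun y hy =>
    (hK y hy).2.trans (mul_le_mul (le_abs_self M) (hmax hy) (norm_nonneg _) (abs_nonneg M))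
  have hmvt := (convex_closedBall x₀ r).norm_image_sub_le_of_norm_hasDerivWithin_le
    (fun y hy => (hK y hy).1.hasDerivWithinAt) hderiv (mem_closedBall_self hr.le) hz
  rw [h0, sub_zero, ← dist_eq_norm] at hmvt
  have hz0 : ‖w z‖ ≤ 0 := by
    nlinarith [mul_le_mul_of_nonneg_left (mem_closedBall.1 hz)
      (mul_nonneg (abs_nonneg M) (norm_nonneg (w z)))]
  filter_upwards [closedBall_mem_nhds x₀ hr] with y hy
  exact norm_le_zero_iff.1 ((hmax hy).trans hz0)

theorem isWKBSum_neg_neg {Ω : Set ℂ} {h : ℝ} {s : ℂ} {sq H : ℂ → ℂ} {x₀ : ℂ} {we wo : ℂ → ℂ} :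
    IsWKBSum Ω h (-s) (fun z => -sq z) H x₀ we wo ↔ IsWKBSum Ω h s sq H x₀ we wo := by
  simp only [IsWKBSum, mul_neg, neg_mul, neg_div, neg_neg]

theorem IsWKBSum.congr_logDeriv {Ω : Set ℂ} {h : ℝ} {s : ℂ} {sq H H' : ℂ → ℂ} {x₀ : ℂ}
    {we wo : ℂ → ℂ} (hH : EqOn (logDeriv H') (logDeriv H) Ω)
    (hw : IsWKBSum Ω h s sq H' x₀ we wo) : IsWKBSum Ω h s sq H x₀ we wo := by
  obtain ⟨hwe, hwo, hder⟩ := hw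
  refine ⟨hwe, hwo, fun x hx => ?_⟩
  simpa only [← logDeriv_apply, hH hx] using hder x hx

theorem IsWKBSum.eqOn {Ω : Set ℂ} {h : ℝ} {s : ℂ} {sq H : ℂ → ℂ} {x₀ : ℂ}
    {we wo we' wo' : ℂ → ℂ} (hΩ : IsOpen Ω) (hΩc : IsPreconnected Ω) (hx₀ : x₀ ∈ Ω)
    (hb : IsBoundedUnder (· ≤ ·) (𝓝 x₀) fun x => ‖logDeriv H x‖ + ‖s * (2 * sq x / h)‖)
    (hw : IsWKBSum Ω h s sq H x₀ we wo) (hw' : IsWKBSum Ω h s sq H x₀ we' wo') :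
    EqOn we we' Ω ∧ EqOn wo wo' Ω := by
  obtain ⟨hwe, hwo, hder⟩ := hw
  obtain ⟨hwe', hwo', hder'⟩ := hw'
  set d : ℂ → ℂ × ℂ := fun x => (we x - we' x, wo x - wo' x)
  set d' : ℂ → ℂ × ℂ := fun x =>
    (logDeriv H x * (d x).2, logDeriv H x * (d x).1 - s * (2 * sq x / h) * (d x).2)
  have hd : ∀ x ∈ Ω, HasDerivAt d (d' x) x := fun x hx =>
    (((hder x hx).1.sub (hder' x hx).1).prodMk ((hder x hx).2.sub (hder' x hx).2)).congr_deriv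
      (by simp only [d, d', logDeriv_apply]; ext <;> ring)
  obtain ⟨M, hM⟩ := hb
  have hbound : ∀ᶠ x in 𝓝 x₀, ‖d' x‖ ≤ M * ‖d x‖ := by
    filter_upwards [hM] with x hx
    refine le_trans ?_ (mul_le_mul_of_nonneg_right hx (norm_nonneg _))
    have h1 := norm_fst_le (d x)
    have h2 := norm_snd_le (d x)
    refine norm_prod_le_iff.2 ⟨?_, ?_⟩
    · calc ‖logDeriv H x * (d x).2‖ ≤ ‖logDeriv H x‖ * ‖d x‖ := by
            rw [norm_mul]; gcongr
        _ ≤ _ := by gcongr; exact le_add_of_nonneg_right (norm_nonneg _)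
    · calc _ ≤ ‖logDeriv H x * (d x).1‖ + ‖s * (2 * sq x / h) * (d x).2‖ := norm_sub_le _ _
        _ ≤ _ := by rw [norm_mul, norm_mul, add_mul]; gcongr
  have hloc : d =ᶠ[𝓝 x₀] 0 := eventuallyEq_zero_of_norm_deriv_le
    (eventually_of_mem (hΩ.mem_nhds hx₀) hd) hbound (by simp [d, hwe, hwe', hwo, hwo'])
  have hzero := (DifferentiableOn.analyticOnNhd (fun x hx => (hd x hx).differentiableAt
    |>.differentiableWithinAt) hΩ).eqOn_zero_of_preconnected_of_eventuallyEq_zero hΩc hx₀ hloc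
  exact ⟨fun x hx => sub_eq_zero.1 (congrArg Prod.fst (hzero hx)),
    fun x hx => sub_eq_zero.1 (congrArg Prod.snd (hzero hx))⟩

theorem isBoundedUnder_norm_logDeriv_of_pow_eq {H φ : ℂ → ℂ} {x₀ : ℂ} {n : ℕ} (hn : n ≠ 0)
    (hφ : AnalyticAt ℂ φ x₀) (hφ0 : φ x₀ ≠ 0) (hH : ∀ᶠ y in 𝓝 x₀, H y ^ n = φ y) :
    IsBoundedUnder (· ≤ ·) (𝓝 x₀) fun y => ‖logDeriv H y‖ := by
  have hcont : ContinuousAt (logDeriv φ) x₀ :=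
    hφ.deriv.continuousAt.div hφ.continuousAt hφ0
  refine ((hcont.norm.div_const n).tendsto.isBoundedUnder_le).mono_le ?_
  filter_upwards [hH.eventually_nhds] with y hy
  by_cases hd : DifferentiableAt ℂ H y
  · rw [← (logDeriv_congr_nhds hy).eq_of_nhds, logDeriv_fun_pow hd, norm_mul, Complex.norm_natCast,
      mul_div_cancel_left₀ _ (Nat.cast_ne_zero.2 hn)]
  · rw [logDeriv_eq_zero_of_not_differentiableAt _ _ hd, norm_zero]
    positivity

theorem isBoundedUnder_norm_logDeriv_add_norm {A H sq : ℂ → ℂ} {lam x₀ s : ℂ} {h : ℝ}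
    (hA : AnalyticAt ℂ A x₀) (hnv : A x₀ ^ 2 - lam ^ 2 ≠ 0)
    (hH : ∀ᶠ y in 𝓝 x₀, H y ^ 4 = (A y + lam) / (A y - lam)) (hsq : ContinuousAt sq x₀) :
    IsBoundedUnder (· ≤ ·) (𝓝 x₀) fun x => ‖logDeriv H x‖ + ‖s * (2 * sq x / h)‖ := by
  obtain ⟨hplus, hminus⟩ := mul_ne_zero_iff.1 (sq_sub_sq (A x₀) lam ▸ hnv)
  refine isBoundedUnder_le_add (isBoundedUnder_norm_logDeriv_of_pow_eq four_ne_zero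
    ((hA.add analyticAt_const).div (hA.sub analyticAt_const) hminus) (div_ne_zero hplus hminus)
    hH) ?_
  exact (continuousAt_const.mul ((continuousAt_const.mul hsq).div_const _)).norm.tendsto
    |>.isBoundedUnder_le

theorem qMat_eq_smul_qMat_mul_sigmaMat {κ : ℂ} (hκ : κ ^ 2 = -1) (Hx : ℂ) :
    qMat Hx = κ • (qMat (κ * Hx) * sigmaMat) := by
  have hκinv : κ⁻¹ = -κ := inv_eq_of_mul_eq_one_right (by linear_combination -hκ)
  rw [qMat, qMat, sigmaMat, Matrix.mul_fin_two, mul_inv, hκinv]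
  ext i j
  fin_cases i <;> fin_cases j <;> simp
  · linear_combination Hx⁻¹ * hκ
  · linear_combination Hx⁻¹ * hκ
  · linear_combination I * Hx * hκ
  · linear_combination -(I * Hx) * hκ

theorem wkbPlus_eq_smul_wkbMinus {κ : ℂ} (hκ : κ ^ 2 = -1) {h : ℝ}
    {Z H Hh we wo weh woh : ℂ → ℂ} {x : ℂ} (hHh : Hh x = κ * H x) (hwe : weh x = we x)
    (hwo : woh x = wo x) :
    wkbPlus h Z H we wo x = κ • wkbMinus h (fun z => -Z z) Hh weh woh x := by
  have hκinv : κ⁻¹ = -κ := inv_eq_of_mul_eq_one_right (by linear_combination -hκ)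
  simp only [wkbPlus, wkbMinus, hHh, hwe, hwo, neg_neg, Prod.smul_mk, smul_eq_mul, mul_inv, hκinv]
  ext
  · linear_combination (exp (Z x / h) * ((H x)⁻¹ * (we x + wo x) + I * H x * (wo x - we x))) * hκ
  · linear_combination (exp (Z x / h) * (-I * (H x)⁻¹ * (we x + wo x) + H x * (we x - wo x))) * hκ

theorem wkbPlus_eqOn_smul_wkbMinus {Ω : Set ℂ} (hΩ : IsOpen Ω) (hΩc : IsPreconnected Ω)
    {h : ℝ} {sq H Hh Z we wo weh woh : ℂ → ℂ} {x₂ : ℂ} (hx₂ : x₂ ∈ Ω) {κ : ℂ}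
    (hκ : κ ^ 2 = -1) (hHh : ∀ x ∈ Ω, Hh x = κ * H x)
    (hb : IsBoundedUnder (· ≤ ·) (𝓝 x₂) fun x => ‖logDeriv H x‖ + ‖1 * (2 * sq x / h)‖)
    (hw : IsWKBSum Ω h 1 sq H x₂ we wo) (hwh : IsWKBSum Ω h (-1) (fun z => -sq z) Hh x₂ weh woh) :
    ∀ x ∈ Ω, wkbPlus h Z H we wo x = κ • wkbMinus h (fun z => -Z z) Hh weh woh x := by
  have hκ0 : κ ≠ 0 := by rintro rfl; norm_num at hκ
  have hlog : EqOn (logDeriv Hh) (logDeriv H) Ω := fun x hx => by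
    have hev : Hh =ᶠ[𝓝 x] fun y => κ * H y :=
      eventually_of_mem (hΩ.mem_nhds hx) hHh
    rw [(logDeriv_congr_nhds hev).eq_of_nhds, logDeriv_const_mul x κ hκ0]
  obtain ⟨hwe, hwo⟩ := hw.eqOn hΩ hΩc hx₂ hb ((isWKBSum_neg_neg.1 hwh).congr_logDeriv hlog)
  exact fun x hx => wkbPlus_eq_smul_wkbMinus hκ (hHh x hx) (hwe hx).symm (hwo hx).symm

theorem rotation_of_H_Q_and_solutions_general
    (A : ℂ → ℂ) (lam α : ℂ) (U : Set ℂ) (hUopen : IsOpen U)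
    (hA : AnalyticOnNhd ℂ A U)
    (hzero : A α ^ 2 = lam ^ 2) (hsimple : A α * deriv A α ≠ 0)
    (hnv : ∀ x ∈ U, x ≠ α → A x ^ 2 - lam ^ 2 ≠ 0)
    (Ω : Set ℂ) (hΩU : Ω ⊆ U) (hΩopen : IsOpen Ω) (hΩconn : IsPreconnected Ω)
    (hαΩ : α ∉ Ω)
    (sq H : ℂ → ℂ) (hsqc : ContinuousOn sq Ω)
    (hH : ∀ x ∈ Ω, H x ≠ 0 ∧ (H x) ^ 4 = (A x + lam) / (A x - lam))
    (Z : ℂ → ℂ) :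
    -- (1) the continuation of `H` along the loop of winding `-1` around `α`
    --     is `iH` if `A(α) = λ`, and `-iH` if `A(α) = -λ`
    (∀ x ∈ Ω, x ≠ α → Metric.closedBall α (dist x α) ⊆ U →
      ∀ G : ℝ → ℂ, ContinuousOn G (Icc 0 1) →
        (∀ t ∈ Icc (0:ℝ) 1,
          (G t) ^ 4 =
            (A (α + Complex.exp (-2 * Real.pi * Complex.I * (t : ℂ)) * (x - α)) + lam) /
            (A (α + Complex.exp (-2 * Real.pi * Complex.I * (t : ℂ)) * (x - α)) - lam)) →
        G 0 = H x →
        ((A α = lam → G 1 = Complex.I * H x) ∧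
         (A α = -lam → G 1 = -Complex.I * H x))) ∧
    -- (2) given the rotated branch `Ĥ` (`H(x̂) = ±i H(x)`), the relation
    --     `Q(x) = ±i Q(x̂) σ` and the relation `u⁺(x,h;α,x₂) = ±i u⁻(x̂,h;α,x̂₂)`
    (∀ Hh : ℂ → ℂ,
      ((A α = lam ∧ ∀ x ∈ Ω, Hh x = Complex.I * H x) ∨
       (A α = -lam ∧ ∀ x ∈ Ω, Hh x = -Complex.I * H x)) →
      ((A α = lam → ∀ x ∈ Ω, qMat (H x) = Complex.I • (qMat (Hh x) * sigmaMat)) ∧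
       (A α = -lam → ∀ x ∈ Ω, qMat (H x) = (-Complex.I) • (qMat (Hh x) * sigmaMat)) ∧
       (∀ h : ℝ, 0 < h → ∀ x₂ ∈ Ω, ∀ we wo weh woh : ℂ → ℂ,
         IsWKBSum Ω h 1 sq H x₂ we wo →
         IsWKBSum Ω h (-1) (fun z => -sq z) Hh x₂ weh woh →
         ((A α = lam → ∀ x ∈ Ω,
            wkbPlus h Z H we wo x
              = Complex.I • wkbMinus h (fun z => -Z z) Hh weh woh x) ∧
          (A α = -lam → ∀ x ∈ Ω,
            wkbPlus h Z H we wo x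
              = (-Complex.I) • wkbMinus h (fun z => -Z z) Hh weh woh x))))) := by
  have hlam : lam ≠ 0 := fun h0 => left_ne_zero_of_mul hsimple
    ((pow_eq_zero_iff two_ne_zero).1 (by rw [hzero, h0, zero_pow two_ne_zero]))
  have hsign : A α = lam → A α ≠ -lam := fun h1 h2 => hlam (by linear_combination (h2 - h1) / 2)
  have hderiv : deriv A α ≠ 0 := right_ne_zero_of_mul hsimple
  refine ⟨fun x _ hx hxU G hG hG4 hG0 => ⟨fun hAα => ?_, fun hAα => ?_⟩, fun Hh hHh => ?_⟩
  · rw [← hG0]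
    exact fourthRoot_clockwiseLoop_one_of_apply_eq hUopen hA.differentiableOn hAα hlam hderiv hnv
      hx hxU hG hG4
  · rw [← hG0]
    exact fourthRoot_clockwiseLoop_one_of_apply_eq_neg hUopen hA.differentiableOn hAα hlam hderiv
      hnv hx hxU hG hG4
  have hb : ∀ x₂ ∈ Ω, ∀ h : ℝ,
      IsBoundedUnder (· ≤ ·) (𝓝 x₂) fun x => ‖logDeriv H x‖ + ‖1 * (2 * sq x / h)‖ :=
    fun x₂ hx₂ h => isBoundedUnder_norm_logDeriv_add_norm (hA x₂ (hΩU hx₂))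
      (hnv x₂ (hΩU hx₂) (ne_of_mem_of_not_mem hx₂ hαΩ))
      (eventually_of_mem (hΩopen.mem_nhds hx₂) fun y hy => (hH y hy).2)
      (hsqc.continuousAt (hΩopen.mem_nhds hx₂))
  rcases hHh with ⟨hAα, hHh⟩ | ⟨hAα, hHh⟩
  · refine ⟨fun _ x hx => hHh x hx ▸ qMat_eq_smul_qMat_mul_sigmaMat I_sq (H x),
      fun h => absurd h (hsign hAα), fun h _ x₂ hx₂ we wo weh woh hw hwh =>
        ⟨fun _ => wkbPlus_eqOn_smul_wkbMinus hΩopen hΩconn hx₂ I_sq hHh (hb x₂ hx₂ h) hw hwh,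
        fun h => absurd h (hsign hAα)⟩⟩
  · have hκ : (-I) ^ 2 = -1 := by rw [neg_sq, I_sq]
    refine ⟨fun h => absurd hAα (hsign h),
      fun _ x hx => hHh x hx ▸ qMat_eq_smul_qMat_mul_sigmaMat hκ (H x),
      fun h _ x₂ hx₂ we wo weh woh hw hwh => ⟨fun h => absurd hAα (hsign h),
        fun _ => wkbPlus_eqOn_smul_wkbMinus hΩopen hΩconn hx₂ hκ hHh (hb x₂ hx₂ h) hw hwh⟩⟩

theorem rotation_of_H_Q_and_solutions
    (A : ℂ → ℂ) (lam α : ℂ) (U : Set ℂ) (hU : U ∈ nhds α) (hUopen : IsOpen U)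
    (hA : AnalyticOnNhd ℂ A U)
    (hzero : A α ^ 2 = lam ^ 2) (hsimple : A α * deriv A α ≠ 0)
    (hnv : ∀ x ∈ U, x ≠ α → A x ^ 2 - lam ^ 2 ≠ 0)
    (Ω : Set ℂ) (hΩU : Ω ⊆ U) (hΩopen : IsOpen Ω) (hΩconn : IsPreconnected Ω)
    (hαΩ : α ∉ Ω)
    (sq H : ℂ → ℂ) (hsqc : ContinuousOn sq Ω)
    (hsq : ∀ x ∈ Ω, sq x ^ 2 = A x ^ 2 - lam ^ 2)
    (hH : ∀ x ∈ Ω, H x ≠ 0 ∧ (H x) ^ 4 = (A x + lam) / (A x - lam))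
    -- the phase `z(·;α)`
    (Z : ℂ → ℂ) (hZ : ∀ x ∈ Ω, HasDerivAt Z (sq x) x) :
    -- (1) the continuation of `H` along the loop of winding `-1` around `α`
    --     is `iH` if `A(α) = λ`, and `-iH` if `A(α) = -λ`
    (∀ x ∈ Ω, x ≠ α → Metric.closedBall α (dist x α) ⊆ U →
      ∀ G : ℝ → ℂ, ContinuousOn G (Icc 0 1) →
        (∀ t ∈ Icc (0:ℝ) 1,
          (G t) ^ 4 =
            (A (α + Complex.exp (-2 * Real.pi * Complex.I * (t : ℂ)) * (x - α)) + lam) /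
            (A (α + Complex.exp (-2 * Real.pi * Complex.I * (t : ℂ)) * (x - α)) - lam)) →
        G 0 = H x →
        ((A α = lam → G 1 = Complex.I * H x) ∧
         (A α = -lam → G 1 = -Complex.I * H x))) ∧
    -- (2) given the rotated branch `Ĥ` (`H(x̂) = ±i H(x)`), the relation
    --     `Q(x) = ±i Q(x̂) σ` and the relation `u⁺(x,h;α,x₂) = ±i u⁻(x̂,h;α,x̂₂)`
    (∀ Hh : ℂ → ℂ,
      ((A α = lam ∧ ∀ x ∈ Ω, Hh x = Complex.I * H x) ∨
       (A α = -lam ∧ ∀ x ∈ Ω, Hh x = -Complex.I * H x)) →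
      ((A α = lam → ∀ x ∈ Ω, qMat (H x) = Complex.I • (qMat (Hh x) * sigmaMat)) ∧
       (A α = -lam → ∀ x ∈ Ω, qMat (H x) = (-Complex.I) • (qMat (Hh x) * sigmaMat)) ∧
       (∀ h : ℝ, 0 < h → ∀ x₂ ∈ Ω, ∀ we wo weh woh : ℂ → ℂ,
         IsWKBSum Ω h 1 sq H x₂ we wo →
         IsWKBSum Ω h (-1) (fun z => -sq z) Hh x₂ weh woh →
         ((A α = lam → ∀ x ∈ Ω,
            wkbPlus h Z H we wo x
              = Complex.I • wkbMinus h (fun z => -Z z) Hh weh woh x) ∧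
          (A α = -lam → ∀ x ∈ Ω,
            wkbPlus h Z H we wo x
              = (-Complex.I) • wkbMinus h (fun z => -Z z) Hh weh woh x))))) :=
  rotation_of_H_Q_and_solutions_general A lam α U hUopen hA hzero hsimple hnv Ω hΩU hΩopen hΩconn
    hαΩ sq H hsqc hH Z
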